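/- arXiv:math/0309457 — 4 statements merged into one kernel-verified Lean document; each statement's English description precedes it below -/
import Mathlib

section
/- Let ξ be a real random variable on a probability space such that e^ξ and e^{2ξ} are integrable, let m = E[e^ξ], d = Var(e^ξ) with d > 0, let ρ > 0, and let s > 0. Suppose V : (0,∞) → ℝ is measurable and V(s·e^ξ) is square-integrable. Set Δ = Cov(V(s·e^ξ), e^ξ)/(s·d) and define the kernel g : ℝ → ℝ by g(x) = (e^x − m)·(1 − ρ·m)/d + ρ. Then ρ·(E[V(s·e^ξ)] − Δ·s·m) + Δ·s = E[V(s·e^ξ)·g(ξ)]. In other words, the Black–Scholes pricing rule E[Π̃] = e^{rτ}·Π (with ρ = e^{−rτ}) applied to the variance-minimal hedged portfolio is equivalent to the integral equation V_{k+1}(s) = E[V_k(s·e^ξ)·g(ξ)]. -/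
/-!
With `X = V(s·e^ξ)` and `Y = e^ξ`, the kernel is affine in `Y`: `g(ξ) = (Y - m)·(1 - ρm)/d + ρ`.
Hence `E[X·g(ξ)] = Cov(X, Y)·(1 - ρm)/d + ρ·E[X]`, while `Δ·s = Cov(X, Y)/d` turns the
left-hand side into `ρ·E[X] + Cov(X, Y)·(1 - ρm)/d` as well.
-/

open MeasureTheory ProbabilityTheory Real

namespace ProbabilityTheory

variable {Ω : Type*} {mΩ : MeasurableSpace Ω} {μ : Measure Ω} {X Y : Ω → ℝ}

lemma integral_mul_centered_mul_add [IsProbabilityMeasure μ] (hX : MemLp X 2 μ)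
    (hY : MemLp Y 2 μ) (a b : ℝ) :
    ∫ ω, X ω * ((Y ω - μ[Y]) * a + b) ∂μ = cov[X, Y; μ] * a + b * μ[X] := by
  have hXY : Integrable (fun ω => X ω * Y ω) μ := hX.integrable_mul hY
  have hX1 : Integrable X μ := hX.integrable one_le_two
  calc ∫ ω, X ω * ((Y ω - μ[Y]) * a + b) ∂μ
      = ∫ ω, X ω * Y ω * a + X ω * (b - μ[Y] * a) ∂μ := by congr 1; ext ω; ring
    _ = μ[X * Y] * a + μ[X] * (b - μ[Y] * a) := by
      rw [integral_add (hXY.mul_const a) (hX1.mul_const _), integral_mul_const,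
        integral_mul_const]
      rfl
    _ = cov[X, Y; μ] * a + b * μ[X] := by rw [covariance_eq_sub hX hY]; ring

end ProbabilityTheory

lemma memLp_two_exp_of_integrable {Ω : Type*} {mΩ : MeasurableSpace Ω} {μ : Measure Ω}
    {ξ : Ω → ℝ} (h1 : Integrable (fun ω => exp (ξ ω)) μ)
    (h2 : Integrable (fun ω => exp (2 * ξ ω)) μ) : MemLp (fun ω => exp (ξ ω)) 2 μ := by
  rw [memLp_two_iff_integrable_sq h1.aestronglyMeasurable]
  simpa only [← exp_nat_mul, Nat.cast_ofNat] using h2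

theorem pricing_rule_eq_integral_equation_general {Ω : Type*} [MeasurableSpace Ω]
    (P : Measure Ω) [IsProbabilityMeasure P]
    (ξ : Ω → ℝ)
    (hint1 : Integrable (fun ω => exp (ξ ω)) P)
    (hint2 : Integrable (fun ω => exp (2 * ξ ω)) P)
    (m d : ℝ) (hm : m = ∫ ω, exp (ξ ω) ∂P)
    (ρ : ℝ) (s : ℝ) (hs : 0 < s)
    (V : ℝ → ℝ)
    (hV2 : MemLp (fun ω => V (s * exp (ξ ω))) 2 P)
    (Δ : ℝ)
    (hΔ : Δ = (∫ ω, (V (s * exp (ξ ω)) - ∫ ω', V (s * exp (ξ ω')) ∂P) *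
                (exp (ξ ω) - ∫ ω', exp (ξ ω') ∂P) ∂P) / (s * d))
    (g : ℝ → ℝ) (hg : g = fun x => (exp x - m) * (1 - ρ * m) / d + ρ) :
    ρ * ((∫ ω, V (s * exp (ξ ω)) ∂P) - Δ * s * m) + Δ * s
      = ∫ ω, V (s * exp (ξ ω)) * g (ξ ω) ∂P := by
  have hΔs : Δ * s = cov[fun ω => V (s * exp (ξ ω)), fun ω => exp (ξ ω); P] / d := by
    rw [hΔ, covariance]
    field_simp
  have hgY : ∀ ω, g (ξ ω) = (exp (ξ ω) - m) * ((1 - ρ * m) / d) + ρ := fun ω => by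
    simp only [hg, mul_div_assoc]
  simp_rw [hgY, hm, integral_mul_centered_mul_add hV2 (memLp_two_exp_of_integrable hint1 hint2)]
  rw [hΔs, ← hm]
  ring

/-- The Black–Scholes pricing rule `E[Π̃] = e^{rτ}·Π` (i.e. `ρ·E[Π̃] = Π` with
`ρ = e^{-rτ}`) applied to the variance-minimal hedged portfolio is equivalent to
the integral equation `V_{k+1}(s) = E[V_k(s·e^ξ)·g(ξ)]`. -/
theorem pricing_rule_eq_integral_equation {Ω : Type*} [MeasurableSpace Ω]
    (P : Measure Ω) [IsProbabilityMeasure P]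
    (ξ : Ω → ℝ) (hξ : Measurable ξ)
    (hint1 : Integrable (fun ω => exp (ξ ω)) P)
    (hint2 : Integrable (fun ω => exp (2 * ξ ω)) P)
    (m d : ℝ) (hm : m = ∫ ω, exp (ξ ω) ∂P)
    (hd : d = variance (fun ω => exp (ξ ω)) P) (hd0 : 0 < d)
    (ρ : ℝ) (hρ : 0 < ρ) (s : ℝ) (hs : 0 < s)
    (V : ℝ → ℝ) (hV : Measurable V)
    (hV2 : MemLp (fun ω => V (s * exp (ξ ω))) 2 P)
    (Δ : ℝ)
    (hΔ : Δ = (∫ ω, (V (s * exp (ξ ω)) - ∫ ω', V (s * exp (ξ ω')) ∂P) *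
                (exp (ξ ω) - ∫ ω', exp (ξ ω') ∂P) ∂P) / (s * d))
    (g : ℝ → ℝ) (hg : g = fun x => (exp x - m) * (1 - ρ * m) / d + ρ) :
    ρ * ((∫ ω, V (s * exp (ξ ω)) ∂P) - Δ * s * m) + Δ * s
      = ∫ ω, V (s * exp (ξ ω)) * g (ξ ω) ∂P :=
  pricing_rule_eq_integral_equation_general P ξ hint1 hint2 m d hm ρ s hs V hV2 Δ hΔ g hg
end

section
/- Let m > 0, d > 0, and ρ > 0 be real numbers, and define g : ℝ → ℝ by g(x) = (e^x − m)·(1 − ρ·m)/d + ρ. Then g(x) ≥ 0 for all x ∈ ℝ if and only if both ρ·m ≤ 1 and ρ·(d + m²) ≥ m. Equivalently, with ρ = e^{−rτ}, m = E[e^ξ], and d + m² = E[e^{2ξ}], the kernel g is nonnegative on ℝ if and only if (1/τ)·ln(E[e^ξ]) ≤ r ≤ (1/τ)·ln(E[e^{2ξ}]/E[e^ξ]). -/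
/-!
Writing `c = (1 - ρm)/d`, the kernel is the affine function `t ↦ c t + (ρ - m c)` of `t = eˣ`,
which ranges over all of `(0, ∞)`. An affine function is nonnegative on `(0, ∞)` iff its slope
(look at `t → ∞`) and its value at `0⁺` are both nonnegative; clearing `d` and taking logarithms
turns these two conditions into the stated ones.
-/

open Real

theorem forall_pos_affine_nonneg_iff (a b : ℝ) :
    (∀ t > 0, 0 ≤ a * t + b) ↔ 0 ≤ a ∧ 0 ≤ b := by
  refine ⟨fun h => ⟨?_, ?_⟩, fun ⟨ha, hb⟩ t ht => by positivity⟩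
  · by_contra! ha
    have := h ((|b| + 1) / -a) (div_pos (by positivity) (neg_pos.2 ha))
    rw [mul_div_assoc', div_neg, mul_comm, mul_div_cancel_right₀ _ ha.ne] at this
    linarith [le_abs_self b]
  · have hlim : Filter.Tendsto (fun t => a * t + b) (nhdsWithin 0 (Set.Ioi 0)) (nhds b) := by
      have hcont : Continuous fun t => a * t + b := by fun_prop
      exact (hcont.tendsto' 0 b (by simp)).mono_left nhdsWithin_le_nhds
    exact ge_of_tendsto hlim (eventually_nhdsWithin_of_forall h)

theorem forall_exp_affine_nonneg_iff (a b : ℝ) :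
    (∀ x, 0 ≤ a * exp x + b) ↔ 0 ≤ a ∧ 0 ≤ b := by
  rw [← forall_pos_affine_nonneg_iff, ← Set.forall_mem_range (p := fun t => 0 ≤ a * t + b),
    range_exp]
  rfl

theorem exp_neg_mul_le_one_iff {y m : ℝ} (hm : 0 < m) : exp (-y) * m ≤ 1 ↔ log m ≤ y := by
  rw [exp_neg, inv_mul_le_iff₀ (exp_pos y), mul_one, log_le_iff_le_exp hm]

theorem le_exp_neg_mul_iff {y m s : ℝ} (hm : 0 < m) (hs : 0 < s) :
    m ≤ exp (-y) * s ↔ y ≤ log (s / m) := by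
  rw [exp_neg, inv_mul_eq_div, le_div_iff₀ (exp_pos y), le_log_iff_exp_le (div_pos hs hm),
    le_div_iff₀ hm, mul_comm]

/-- The hedging kernel `g(x) = (e^x − m)(1 − ρm)/d + ρ` is nonnegative on all
of `ℝ` iff `ρm ≤ 1` and `ρ(d + m²) ≥ m`; equivalently, with `ρ = e^{−rτ}`,
`m = E[e^ξ]`, `d + m² = E[e^{2ξ}]`, iff
`(1/τ)·ln E[e^ξ] ≤ r ≤ (1/τ)·ln(E[e^{2ξ}]/E[e^ξ])`. -/
theorem kernel_nonneg_iff (m d ρ r τ : ℝ) (hm : 0 < m) (hd : 0 < d)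
    (hτ : 0 < τ) (hρ : ρ = exp (-(r * τ)))
    (g : ℝ → ℝ) (hg : g = fun x => (exp x - m) * (1 - ρ * m) / d + ρ) :
    ((∀ x : ℝ, 0 ≤ g x) ↔ (ρ * m ≤ 1 ∧ m ≤ ρ * (d + m ^ 2))) ∧
      ((∀ x : ℝ, 0 ≤ g x) ↔
        ((1 / τ) * log m ≤ r ∧ r ≤ (1 / τ) * log ((d + m ^ 2) / m))) := by
  set c := (1 - ρ * m) / d
  have hg_affine : ∀ x, g x = c * exp x + (ρ - m * c) := fun x => by rw [hg]; ring
  have hslope : 0 ≤ c ↔ ρ * m ≤ 1 := by rw [le_div_iff₀ hd, zero_mul, sub_nonneg]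
  have hintercept : 0 ≤ ρ - m * c ↔ m ≤ ρ * (d + m ^ 2) := by
    rw [sub_nonneg, ← mul_div_assoc, div_le_iff₀ hd]
    constructor <;> intro h <;> linarith
  have key : (∀ x, 0 ≤ g x) ↔ ρ * m ≤ 1 ∧ m ≤ ρ * (d + m ^ 2) := by
    simp only [hg_affine, forall_exp_affine_nonneg_iff, hslope, hintercept]
  refine ⟨key, key.trans (and_congr ?_ ?_)⟩
  · rw [hρ, exp_neg_mul_le_one_iff hm, one_div_mul_eq_div, div_le_iff₀ hτ]
  · rw [hρ, le_exp_neg_mul_iff hm (by positivity), one_div_mul_eq_div, le_div_iff₀ hτ]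
end

section
/- Let ξ be a Gaussian random variable with mean μ·τ and variance σ²·τ (σ > 0, τ > 0), set m = e^{μτ + σ²τ/2}, d = e^{2μτ + σ²τ}·(e^{σ²τ} − 1), ρ = e^{−rτ} with r ∈ ℝ, and define g : ℝ → ℝ by g(x) = (e^x − m)·(1 − ρ·m)/d + ρ. Set M₁ = e^{−rτ} + (e^{(μ−r)τ + σ²τ/2} − 1)/(e^{μτ + (3/2)σ²τ} − e^{μτ + σ²τ/2}) and M₂ = (1 − e^{(μ−r)τ + σ²τ/2})/(e^{μτ + (3/2)σ²τ} − e^{μτ + σ²τ/2}). Then for every real p, E[e^{p·ξ}·g(ξ)] = e^{μτ·p + σ²τ·p²/2}·(M₁ + M₂·e^{p·σ²τ}). -/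
/-!
The kernel is affine in `e^x`: `g(x) = A e^x + (ρ - A m)` with `A = (1 - ρ m) / d`, so `U(p)` is
`A · M(p + 1) + (ρ - A m) · M(p)` for the Gaussian moment generating function
`M(t) = e^{μτ t + σ²τ t²/2}`. Since `M(p + 1) = M(p) · m · e^{p σ²τ}` and
`d = m · (e^{μτ + 3σ²τ/2} - e^{μτ + σ²τ/2})`, the two coefficients are `A m = M₂` and
`ρ - A m = M₁`.
-/

open MeasureTheory ProbabilityTheory Real
open scoped NNReal

lemma integral_exp_mul_mul_affine_exp_gaussianReal (μ : ℝ) (v : ℝ≥0) (a b t : ℝ) :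
    ∫ x, exp (t * x) * (a * exp x + b) ∂gaussianReal μ v
      = exp (μ * t + v * t ^ 2 / 2) * (a * exp (μ + v / 2) * exp (t * v) + b) := by
  have hsplit : (fun x => exp (t * x) * (a * exp x + b))
      = fun x => a * exp ((t + 1) * x) + b * exp (t * x) := by
    funext x
    rw [add_one_mul, exp_add]
    ring
  have hmgf (s : ℝ) : ∫ x, exp (s * x) ∂gaussianReal μ v = exp (μ * s + v * s ^ 2 / 2) :=
    congrFun mgf_fun_id_gaussianReal s
  rw [hsplit, integral_add ((integrable_exp_mul_gaussianReal _).const_mul a)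
      ((integrable_exp_mul_gaussianReal _).const_mul b),
    integral_const_mul, integral_const_mul, hmgf, hmgf]
  have hshift : exp (μ * (t + 1) + v * (t + 1) ^ 2 / 2)
      = exp (μ * t + v * t ^ 2 / 2) * exp (μ + v / 2) * exp (t * v) := by
    rw [← exp_add, ← exp_add]
    ring_nf
  rw [hshift]
  ring

lemma integral_exp_mul_mul_affine_exp_of_map_eq_gaussianReal {Ω : Type*} [MeasurableSpace Ω]
    {P : Measure Ω} {X : Ω → ℝ} {μ : ℝ} {v : ℝ≥0} (hX : P.map X = gaussianReal μ v)
    (a b t : ℝ) :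
    ∫ ω, exp (t * X ω) * (a * exp (X ω) + b) ∂P
      = exp (μ * t + v * t ^ 2 / 2) * (a * exp (μ + v / 2) * exp (t * v) + b) := by
  have hX_meas : AEMeasurable X P := aemeasurable_of_map_neZero (by rw [hX]; infer_instance)
  rw [← integral_exp_mul_mul_affine_exp_gaussianReal, ← hX,
    integral_map hX_meas (by fun_prop)]

lemma exp_two_mul_add_mul_exp_sub_one (a v : ℝ) :
    exp (2 * a + v) * (exp v - 1)
      = exp (a + v / 2) * (exp (a + 3 / 2 * v) - exp (a + v / 2)) := by
  rw [mul_sub, mul_sub, mul_one, ← exp_add, ← exp_add, ← exp_add]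
  ring_nf

theorem lognormal_kernel_mellin_general {Ω : Type*} [MeasurableSpace Ω]
    (P : Measure Ω)
    (ξ : Ω → ℝ)
    (μ σ τ r : ℝ) (hτ : 0 < τ)
    (hgauss : Measure.map ξ P = gaussianReal (μ * τ) (Real.toNNReal (σ ^ 2 * τ)))
    (m d ρ : ℝ)
    (hm : m = exp (μ * τ + σ ^ 2 * τ / 2))
    (hd : d = exp (2 * μ * τ + σ ^ 2 * τ) * (exp (σ ^ 2 * τ) - 1))
    (hρ : ρ = exp (-(r * τ)))
    (g : ℝ → ℝ) (hg : g = fun x => (exp x - m) * (1 - ρ * m) / d + ρ)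
    (M₁ M₂ : ℝ)
    (hM₁ : M₁ = exp (-(r * τ)) + (exp ((μ - r) * τ + σ ^ 2 * τ / 2) - 1) /
        (exp (μ * τ + (3 / 2) * σ ^ 2 * τ) - exp (μ * τ + σ ^ 2 * τ / 2)))
    (hM₂ : M₂ = (1 - exp ((μ - r) * τ + σ ^ 2 * τ / 2)) /
        (exp (μ * τ + (3 / 2) * σ ^ 2 * τ) - exp (μ * τ + σ ^ 2 * τ / 2))) :
    ∀ p : ℝ, (∫ ω, exp (p * ξ ω) * g (ξ ω) ∂P)
      = exp (μ * τ * p + σ ^ 2 * τ * p ^ 2 / 2) * (M₁ + M₂ * exp (p * σ ^ 2 * τ)) := by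
  intro p
  have hv : ((σ ^ 2 * τ).toNNReal : ℝ) = σ ^ 2 * τ := Real.coe_toNNReal _ (by positivity)
  set A := (1 - ρ * m) / d with hA
  have hg_affine : g = fun x => A * exp x + (ρ - A * m) := by
    rw [hg, hA]; funext x; ring
  have hdD : d = m * (exp (μ * τ + (3 / 2) * σ ^ 2 * τ) - exp (μ * τ + σ ^ 2 * τ / 2)) := by
    rw [hd, hm, mul_assoc 2, exp_two_mul_add_mul_exp_sub_one, mul_assoc (3 / 2 : ℝ)]
  have hρm : exp ((μ - r) * τ + σ ^ 2 * τ / 2) = ρ * m := by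
    rw [hρ, hm, ← exp_add]; ring_nf
  have hAm : A * m = M₂ := by
    rw [hA, hM₂, hρm, hdD, div_mul_eq_mul_div, mul_comm m,
      mul_div_mul_right _ _ (by rw [hm]; positivity)]
  have hM₁M₂ : M₁ = ρ - M₂ := by
    rw [hM₁, hM₂, ← hρ]
    ring
  rw [hg_affine, integral_exp_mul_mul_affine_exp_of_map_eq_gaussianReal hgauss, hv, ← hm, hAm,
    hM₁M₂, ← mul_assoc p]
  ring

/-- Explicit formula for `U(p) = E[e^{pξ}·g(ξ)]` in the lognormal example:
`U(p) = e^{μτp + σ²τp²/2}·(M₁ + M₂·e^{pσ²τ})`. -/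
theorem lognormal_kernel_mellin {Ω : Type*} [MeasurableSpace Ω]
    (P : Measure Ω) [IsProbabilityMeasure P]
    (ξ : Ω → ℝ) (hξ : Measurable ξ)
    (μ σ τ r : ℝ) (hσ : 0 < σ) (hτ : 0 < τ)
    (hgauss : Measure.map ξ P = gaussianReal (μ * τ) (Real.toNNReal (σ ^ 2 * τ)))
    (m d ρ : ℝ)
    (hm : m = exp (μ * τ + σ ^ 2 * τ / 2))
    (hd : d = exp (2 * μ * τ + σ ^ 2 * τ) * (exp (σ ^ 2 * τ) - 1))
    (hρ : ρ = exp (-(r * τ)))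
    (g : ℝ → ℝ) (hg : g = fun x => (exp x - m) * (1 - ρ * m) / d + ρ)
    (M₁ M₂ : ℝ)
    (hM₁ : M₁ = exp (-(r * τ)) + (exp ((μ - r) * τ + σ ^ 2 * τ / 2) - 1) /
        (exp (μ * τ + (3 / 2) * σ ^ 2 * τ) - exp (μ * τ + σ ^ 2 * τ / 2)))
    (hM₂ : M₂ = (1 - exp ((μ - r) * τ + σ ^ 2 * τ / 2)) /
        (exp (μ * τ + (3 / 2) * σ ^ 2 * τ) - exp (μ * τ + σ ^ 2 * τ / 2))) :
    ∀ p : ℝ, (∫ ω, exp (p * ξ ω) * g (ξ ω) ∂P)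
      = exp (μ * τ * p + σ ^ 2 * τ * p ^ 2 / 2) * (M₁ + M₂ * exp (p * σ ^ 2 * τ)) :=
  lognormal_kernel_mellin_general P ξ μ σ τ r hτ hgauss m d ρ hm hd hρ g hg M₁ M₂ hM₁ hM₂
end

section
/- Let n ≥ 1 be an integer, μ, r ∈ ℝ, σ > 0, τ > 0, and let M₁, M₂ ∈ ℝ. Define G_n : (0,∞) → ℝ by G_n(x) = Σ_{k=0}^n C(n,k)·M₁^{n−k}·M₂^k·(1/(σ√(2πnτ)))·e^{−(ln x + nμτ + kσ²τ)²/(2nσ²τ)}. Then for every complex p, ∫₀^∞ x^{p−1}·G_n(x) dx = Σ_{k=0}^n C(n,k)·M₁^{n−k}·M₂^k·e^{−p·(nμτ + kσ²τ) + nσ²τ·p²/2}, and this equals (e^{−μτ·p + σ²τ·p²/2}·(M₁ + M₂·e^{−p·σ²τ}))^n. -/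
/-!
Substituting `x = eᵗ` turns a Mellin transform into the two-sided Laplace transform of
`t ↦ f (eᵗ)`. Each summand of `G_n` is then a Gaussian in `t` with variance `A = nσ²τ`, whose
Laplace transform `√(2πA) e^{-pa + Ap²/2}` comes from completing the square; the factor `√(2πA)`
cancels the normalisation, and the resulting sum is the binomial expansion of the `n`-th power.
-/

open MeasureTheory Real Set Finset

section Mellin

variable {E : Type*} [NormedAddCommGroup E]

theorem integrableOn_Ioi_zero_iff_integrable_exp_smul [NormedSpace ℝ E] (g : ℝ → E) :
    IntegrableOn g (Ioi 0) ↔ Integrable (fun t : ℝ => rexp t • g (rexp t)) := by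
  rw [← Real.range_exp, ← image_univ, integrableOn_image_iff_integrableOn_abs_deriv_smul
    MeasurableSet.univ (fun x _ => (Real.hasDerivAt_exp x).hasDerivWithinAt)
    Real.exp_injective.injOn, integrableOn_univ]
  simp only [abs_of_pos (Real.exp_pos _)]

theorem integral_Ioi_zero_eq_integral_exp_smul [NormedSpace ℝ E] (g : ℝ → E) :
    ∫ x in Ioi 0, g x = ∫ t : ℝ, rexp t • g (rexp t) := by
  rw [← Real.range_exp, ← image_univ, integral_image_eq_integral_abs_deriv_smul
    MeasurableSet.univ (fun x _ => (Real.hasDerivAt_exp x).hasDerivWithinAt)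
    Real.exp_injective.injOn, Measure.restrict_univ]
  simp only [abs_of_pos (Real.exp_pos _)]

variable [NormedSpace ℂ E]

theorem exp_smul_cpow_smul (t : ℝ) (s : ℂ) (e : E) :
    rexp t • ((rexp t : ℂ) ^ (s - 1) • e) = Complex.exp (s * t) • e := by
  rw [← Complex.coe_smul, smul_smul,
    Complex.cpow_def_of_ne_zero (Complex.ofReal_ne_zero.2 (Real.exp_pos t).ne'),
    ← Complex.ofReal_log (Real.exp_pos t).le, Real.log_exp, Complex.ofReal_exp,
    ← Complex.exp_add]
  congr 2
  ring

theorem mellinConvergent_iff_integrable_cexp_smul (f : ℝ → E) (s : ℂ) :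
    MellinConvergent f s ↔ Integrable (fun t : ℝ => Complex.exp (s * t) • f (rexp t)) := by
  simp only [MellinConvergent, integrableOn_Ioi_zero_iff_integrable_exp_smul,
    exp_smul_cpow_smul]

theorem mellin_eq_integral_cexp_smul (f : ℝ → E) (s : ℂ) :
    mellin f s = ∫ t : ℝ, Complex.exp (s * t) • f (rexp t) := by
  simp only [mellin, integral_Ioi_zero_eq_integral_exp_smul, exp_smul_cpow_smul]

theorem HasMellin.const_smul {f : ℝ → E} {s : ℂ} {m : E} (hf : HasMellin f s m) (c : ℂ) :
    HasMellin (fun x => c • f x) s (c • m) := by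
  simpa only [hf.2] using hasMellin_const_smul hf.1 c

theorem hasMellin_sum {ι : Type*} {f : ι → ℝ → E} {m : ι → E} {s : ℂ} (I : Finset ι)
    (hf : ∀ i ∈ I, HasMellin (f i) s (m i)) :
    HasMellin (fun x => ∑ i ∈ I, f i x) s (∑ i ∈ I, m i) := by
  refine ⟨?_, ?_⟩
  · simpa only [MellinConvergent, IntegrableOn, Finset.smul_sum] using
      integrable_finsetSum I fun i hi => (hf i hi).1
  · rw [mellin]
    simp only [Finset.smul_sum]
    rw [integral_finsetSum I fun i hi => (hf i hi).1]
    exact Finset.sum_congr rfl fun i hi => (hf i hi).2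

end Mellin

theorem cexp_mul_exp_neg_sq_add_div (A a t : ℝ) (s : ℂ) :
    Complex.exp (s * t) * (rexp (-(t + a) ^ 2 / (2 * A)) : ℂ)
      = Complex.exp (-(2 * A : ℂ)⁻¹ * t ^ 2 + (s - a / A) * t + -(a ^ 2 / (2 * A))) := by
  rw [Complex.ofReal_exp, ← Complex.exp_add]
  congr 1
  push_cast
  ring

theorem hasMellin_exp_neg_sq_log_add_div {A : ℝ} (hA : 0 < A) (a : ℝ) (s : ℂ) :
    HasMellin (fun x : ℝ => (rexp (-(log x + a) ^ 2 / (2 * A)) : ℂ)) s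
      (√(2 * π * A) * Complex.exp (-s * a + A * s ^ 2 / 2)) := by
  have hb : (-(2 * A : ℂ)⁻¹).re < 0 := by
    simpa using by positivity
  rw [HasMellin, mellinConvergent_iff_integrable_cexp_smul, mellin_eq_integral_cexp_smul]
  simp only [log_exp, smul_eq_mul, cexp_mul_exp_neg_sq_add_div]
  refine ⟨integrable_cexp_quadratic' hb _ _, ?_⟩
  rw [integral_cexp_quadratic hb]
  have hA' : (A : ℂ) ≠ 0 := by exact_mod_cast hA.ne'
  congr 1
  · rw [sqrt_eq_rpow, Complex.ofReal_cpow (by positivity)]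
    push_cast
    congr 1
    field_simp
  · congr 1
    field_simp
    ring

theorem cexp_mul_add_mul_cexp_pow (u v a b : ℂ) (n : ℕ) :
    (Complex.exp u * (a + b * Complex.exp v)) ^ n
      = ∑ k ∈ range (n + 1), (n.choose k : ℂ) * a ^ (n - k) * b ^ k *
          Complex.exp (n * u + k * v) := by
  rw [mul_pow, add_comm a, add_pow, Finset.mul_sum]
  refine Finset.sum_congr rfl fun k _ => ?_
  rw [mul_pow, Complex.exp_add, ← Complex.exp_nat_mul, ← Complex.exp_nat_mul]
  ring

theorem mellin_green_function_general (n : ℕ) (hn : 1 ≤ n) (μ σ τ M₁ M₂ : ℝ)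
    (hσ : 0 < σ) (hτ : 0 < τ)
    (G : ℝ → ℝ)
    (hG : G = fun x => ∑ k ∈ range (n + 1),
        (n.choose k : ℝ) * M₁ ^ (n - k) * M₂ ^ k *
          (1 / (σ * Real.sqrt (2 * π * n * τ))) *
            exp (-(Real.log x + n * μ * τ + k * σ ^ 2 * τ) ^ 2 /
              (2 * n * σ ^ 2 * τ))) :
    ∀ p : ℂ,
      (∫ x in Ioi (0 : ℝ), (x : ℂ) ^ (p - 1) * (G x : ℂ))
          = (∑ k ∈ range (n + 1),
              (n.choose k : ℂ) * (M₁ : ℂ) ^ (n - k) * (M₂ : ℂ) ^ k *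
                Complex.exp (-p * (n * μ * τ + k * σ ^ 2 * τ)
                  + n * σ ^ 2 * τ * p ^ 2 / 2)) ∧
        (∑ k ∈ range (n + 1),
              (n.choose k : ℂ) * (M₁ : ℂ) ^ (n - k) * (M₂ : ℂ) ^ k *
                Complex.exp (-p * (n * μ * τ + k * σ ^ 2 * τ)
                  + n * σ ^ 2 * τ * p ^ 2 / 2))
          = (Complex.exp (-(μ * τ) * p + σ ^ 2 * τ * p ^ 2 / 2) *
              ((M₁ : ℂ) + (M₂ : ℂ) * Complex.exp (-p * (σ ^ 2 * τ)))) ^ n := by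
  intro p
  set A : ℝ := n * σ ^ 2 * τ with hA_def
  have hA : 0 < A := by positivity
  set c : ℕ → ℝ := fun k => n.choose k * M₁ ^ (n - k) * M₂ ^ k / (σ * √(2 * π * n * τ))
  have hG_sum : (fun x => (G x : ℂ)) = fun x => ∑ k ∈ range (n + 1),
      (c k : ℂ) • (rexp (-(log x + (n * μ * τ + k * σ ^ 2 * τ)) ^ 2 / (2 * A)) : ℂ) := by
    funext x
    simp only [hG, c, hA_def, Complex.ofReal_sum, smul_eq_mul, ← Complex.ofReal_mul, mul_one_div]
    refine Finset.sum_congr rfl fun k _ => ?_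
    congr 4 <;> ring
  have hM := hasMellin_sum (range (n + 1)) fun k _ =>
    (hasMellin_exp_neg_sq_log_add_div hA (n * μ * τ + k * σ ^ 2 * τ) p).const_smul (c k)
  refine ⟨?_, ?_⟩
  · change mellin (fun x => (G x : ℂ)) p = _
    have hsqrt : √(2 * π * A) = σ * √(2 * π * n * τ) := by
      rw [show 2 * π * A = σ ^ 2 * (2 * π * n * τ) by ring, sqrt_mul (sq_nonneg σ),
        sqrt_sq hσ.le]
    have hσ' : (σ : ℂ) ≠ 0 := by exact_mod_cast hσ.ne'
    have hs' : (√(2 * π * n * τ) : ℂ) ≠ 0 := by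
      exact_mod_cast (sqrt_pos.2 (by positivity)).ne'
    rw [hG_sum, hM.2]
    refine Finset.sum_congr rfl fun k _ => ?_
    simp only [c, hsqrt, smul_eq_mul, A]
    push_cast
    field_simp
  · rw [cexp_mul_add_mul_cexp_pow]
    refine Finset.sum_congr rfl fun k _ => ?_
    congr 2
    ring

/-- The Green function `G_n` of the lognormal example is the inverse Mellin
transform of `L_n(p) = U(−p)^n`: its Mellin transform equals the binomial sum
`Σ_{k=0}^n C(n,k)·M₁^{n−k}·M₂^k·e^{−p(nμτ+kσ²τ)+nσ²τp²/2}`, which equals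
`(e^{−μτp + σ²τp²/2}·(M₁ + M₂·e^{−pσ²τ}))^n`. -/
theorem mellin_green_function (n : ℕ) (hn : 1 ≤ n) (μ r σ τ M₁ M₂ : ℝ)
    (hσ : 0 < σ) (hτ : 0 < τ)
    (G : ℝ → ℝ)
    (hG : G = fun x => ∑ k ∈ range (n + 1),
        (n.choose k : ℝ) * M₁ ^ (n - k) * M₂ ^ k *
          (1 / (σ * Real.sqrt (2 * π * n * τ))) *
            exp (-(Real.log x + n * μ * τ + k * σ ^ 2 * τ) ^ 2 /
              (2 * n * σ ^ 2 * τ))) :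
    ∀ p : ℂ,
      (∫ x in Ioi (0 : ℝ), (x : ℂ) ^ (p - 1) * (G x : ℂ))
          = (∑ k ∈ range (n + 1),
              (n.choose k : ℂ) * (M₁ : ℂ) ^ (n - k) * (M₂ : ℂ) ^ k *
                Complex.exp (-p * (n * μ * τ + k * σ ^ 2 * τ)
                  + n * σ ^ 2 * τ * p ^ 2 / 2)) ∧
        (∑ k ∈ range (n + 1),
              (n.choose k : ℂ) * (M₁ : ℂ) ^ (n - k) * (M₂ : ℂ) ^ k *
                Complex.exp (-p * (n * μ * τ + k * σ ^ 2 * τ)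
                  + n * σ ^ 2 * τ * p ^ 2 / 2))
          = (Complex.exp (-(μ * τ) * p + σ ^ 2 * τ * p ^ 2 / 2) *
              ((M₁ : ℂ) + (M₂ : ℂ) * Complex.exp (-p * (σ ^ 2 * τ)))) ^ n :=
  mellin_green_function_general n hn μ σ τ M₁ M₂ hσ hτ G hG
end
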